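/- For every k > 1 and every γ ∈ ℝ³ with |γ| ≤ 2k, the Fourier coefficient matrix of the strength satisfies ‖σ̂(γ)‖_F ≤ (1/β₃²) k^{m−2} M_EM(k) + C₂ k^{−1}. -/

import Mathlib

open MeasureTheory

noncomputable section

/-- `ℝ³` with the Euclidean structure. -/
abbrev E3 := EuclideanSpace ℝ (Fin 3)

/-- `β₃ = 1/(4π)`. -/
def beta3 : ℝ := 1 / (4 * Real.pi)

/-- Frobenius norm of a `3×3` complex matrix. -/
def frobC (A : Matrix (Fin 3) (Fin 3) ℂ) : ℝ :=
  Real.sqrt (∑ i, ∑ j, ‖A i j‖ ^ 2)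

/-- Frobenius norm of a `3×3` real matrix. -/
def frobR (A : Matrix (Fin 3) (Fin 3) ℝ) : ℝ :=
  Real.sqrt (∑ i, ∑ j, (A i j) ^ 2)

/-- Entrywise Fourier transform `σ̂(γ) = ∫_{ℝ³} σ(z) e^{−iγ·z} dz` of a matrix-valued
strength. -/
def matHat (σ : E3 → Matrix (Fin 3) (Fin 3) ℝ) (γ : E3) : Matrix (Fin 3) (Fin 3) ℂ :=
  Matrix.of fun i j => ∫ z, (σ z i j : ℂ) * Complex.exp (-Complex.I * ((inner ℝ γ z : ℝ) : ℂ))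

/-- Entrywise integral `∫_{B₁} r(z,ξ) e^{−iγ·z} dz` of the residual. -/
def rIntEM (r : E3 → E3 → Matrix (Fin 3) (Fin 3) ℂ) (ξ γ : E3) :
    Matrix (Fin 3) (Fin 3) ℂ :=
  Matrix.of fun i j =>
    ∫ z in Metric.ball (0 : E3) 1, r z ξ i j * Complex.exp (-Complex.I * ((inner ℝ γ z : ℝ) : ℂ))

/-- Correlation of electric far-field patterns of the stochastic Maxwell equations:
`F_EM(x̂,ŷ,k) = k² β₃² ‖ k^{−m} σ̂(k(x̂+ŷ)) + ∫_{B₁} r(z,−kŷ) e^{−ik(x̂+ŷ)·z} dz ‖_F`. -/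
def FEM (m : ℝ) (σ : E3 → Matrix (Fin 3) (Fin 3) ℝ)
    (r : E3 → E3 → Matrix (Fin 3) (Fin 3) ℂ) (k : ℝ) (x y : E3) : ℝ :=
  k ^ 2 * beta3 ^ 2 *
    frobC (((k ^ (-m) : ℝ) : ℂ) • matHat σ (k • (x + y)) + rIntEM r (-(k • y)) (k • (x + y)))

/-- `M_EM(k) = sup_{x̂,ŷ ∈ S²} F_EM(x̂,ŷ,k)`. -/
def MEM (m : ℝ) (σ : E3 → Matrix (Fin 3) (Fin 3) ℝ)
    (r : E3 → E3 → Matrix (Fin 3) (Fin 3) ℂ) (k : ℝ) : ℝ :=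
  sSup {v : ℝ | ∃ x y : E3, ‖x‖ = 1 ∧ ‖y‖ = 1 ∧ v = FEM m σ r k x y}

end

/-!
Since `|γ| ≤ 2k`, we can write `γ = k (x̂ + ŷ)` with unit vectors `x̂, ŷ` (add to `γ / (2k)` a
suitable multiple of a unit vector orthogonal to it). Then `F_EM(x̂, ŷ, k) ≤ M_EM(k)`, the supremum
being finite because every `F_EM` is bounded by `k² β₃² (k^{-m} ∫ |σ| + C₂ k^{-m-1})`. Since the
phase factor has modulus one, the residual term has Frobenius norm at most
`∫_{B₁} ‖r(z, −kŷ)‖_F ≤ C₂ k^{-m-1}`; the triangle inequality and multiplication by `k^m` finish.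
-/

open Module InnerProductSpace

section UnitVectors

variable {E : Type*} [NormedAddCommGroup E] [InnerProductSpace ℝ E] [FiniteDimensional ℝ E]

theorem exists_norm_eq_one_inner_eq_zero (h2 : 2 ≤ finrank ℝ E) (v : E) :
    ∃ u : E, ‖u‖ = 1 ∧ ⟪v, u⟫_ℝ = 0 := by
  have hspan : finrank ℝ (ℝ ∙ v) ≤ 1 := by
    simpa using finrank_span_le_card (R := ℝ) ({v} : Set E)
  have hpos : 0 < finrank ℝ (ℝ ∙ v)ᗮ := by
    have := (ℝ ∙ v).finrank_add_finrank_orthogonal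
    omega
  obtain ⟨⟨w, hw⟩, hw0⟩ := finrank_pos_iff_exists_ne_zero.1 hpos
  have hw0 : w ≠ 0 := by simpa using hw0
  refine ⟨‖w‖⁻¹ • w, norm_smul_inv_norm hw0, ?_⟩
  rw [real_inner_smul_right,
    (Submodule.mem_orthogonal_singleton_iff_inner_right).1 hw, mul_zero]

theorem exists_norm_eq_one_add_eq (h2 : 2 ≤ finrank ℝ E) {v : E} (hv : ‖v‖ ≤ 2) :
    ∃ x y : E, ‖x‖ = 1 ∧ ‖y‖ = 1 ∧ x + y = v := by
  obtain ⟨u, hu, hvu⟩ := exists_norm_eq_one_inner_eq_zero h2 v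
  set c := √(1 - ‖v‖ ^ 2 / 4)
  have hc : c ^ 2 = 1 - ‖v‖ ^ 2 / 4 := Real.sq_sqrt (by nlinarith [norm_nonneg v])
  have hunit : ∀ s : ℝ, s ^ 2 = c ^ 2 → ‖(1 / 2 : ℝ) • v + s • u‖ = 1 := by
    intro s hs
    have horth : ⟪(1 / 2 : ℝ) • v, s • u⟫_ℝ = 0 := by
      rw [real_inner_smul_left, real_inner_smul_right, hvu, mul_zero, mul_zero]
    rw [← pow_eq_one_iff_of_nonneg (norm_nonneg _) two_ne_zero,
      norm_add_sq_real, horth, mul_zero, add_zero, norm_smul, norm_smul, hu,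
      Real.norm_eq_abs, Real.norm_eq_abs, mul_pow, mul_one, sq_abs, sq_abs, hs, hc]
    ring
  exact ⟨_, _, hunit c rfl, hunit (-c) (neg_sq c), by module⟩

theorem exists_norm_eq_one_smul_add_eq (h2 : 2 ≤ finrank ℝ E) {k : ℝ} (hk : 0 < k)
    {γ : E} (hγ : ‖γ‖ ≤ 2 * k) : ∃ x y : E, ‖x‖ = 1 ∧ ‖y‖ = 1 ∧ k • (x + y) = γ := by
  have hv : ‖k⁻¹ • γ‖ ≤ 2 := by
    rw [norm_smul, norm_inv, Real.norm_of_nonneg hk.le, inv_mul_le_iff₀ hk]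
    linarith
  obtain ⟨x, y, hx, hy, hxy⟩ := exists_norm_eq_one_add_eq h2 hv
  exact ⟨x, y, hx, hy, by rw [hxy, smul_inv_smul₀ hk.ne']⟩

end UnitVectors

theorem norm_exp_neg_I_mul_ofReal (t : ℝ) : ‖Complex.exp (-Complex.I * t)‖ = 1 := by
  simp [Complex.norm_exp]

section Frobenius

attribute [local instance] Matrix.frobeniusNormedAddCommGroup Matrix.frobeniusNormedSpace

theorem Matrix.frobenius_norm_of_integral_le {m n α F : Type*} [Fintype m] [Fintype n]
    [MeasurableSpace α] [NormedAddCommGroup F] [NormedSpace ℝ F] [CompleteSpace F]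
    {μ : Measure α} {f : α → Matrix m n F} (hf : ∀ i j, Integrable (fun z => f z i j) μ) :
    ‖Matrix.of fun i j => ∫ z, f z i j ∂μ‖ ≤ ∫ z, ‖f z‖ ∂μ := by
  -- the Frobenius norm is the `L²` norm of `PiLp 2 (fun _ => PiLp 2 (fun _ => F))`
  let g : α → PiLp 2 (fun _ : m => PiLp 2 (fun _ : n => F)) :=
    fun z => WithLp.toLp 2 fun i => WithLp.toLp 2 (f z i)
  have hg_row : ∀ i, Integrable (fun z => g z i) μ := fun i => Integrable.of_eval_piLp (hf i)
  have hg : (Matrix.of fun i j => ∫ z, f z i j ∂μ) = fun i j => (∫ z, g z ∂μ) i j := by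
    ext i j
    rw [eval_integral_piLp hg_row, eval_integral_piLp (hf i)]
    rfl
  rw [hg]
  exact norm_integral_le_integral_norm g

theorem frobC_eq_norm (A : Matrix (Fin 3) (Fin 3) ℂ) : frobC A = ‖A‖ := by
  rw [frobC, Matrix.frobenius_norm_def, Real.sqrt_eq_rpow]
  simp_rw [Real.rpow_two]

theorem frobC_smul_add_le {c : ℝ} (hc : 0 ≤ c) (A B : Matrix (Fin 3) (Fin 3) ℂ) :
    frobC ((c : ℂ) • A + B) ≤ c * frobC A + frobC B := by
  simp only [frobC_eq_norm]
  calc ‖(c : ℂ) • A + B‖ ≤ ‖(c : ℂ) • A‖ + ‖B‖ := norm_add_le _ _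
    _ = c * ‖A‖ + ‖B‖ := by rw [norm_smul, Complex.norm_of_nonneg hc]

theorem mul_frobC_le_frobC_smul_add {c : ℝ} (hc : 0 ≤ c) (A B : Matrix (Fin 3) (Fin 3) ℂ) :
    c * frobC A ≤ frobC ((c : ℂ) • A + B) + frobC B := by
  simp only [frobC_eq_norm]
  calc c * ‖A‖ = ‖(c : ℂ) • A + B - B‖ := by
        rw [add_sub_cancel_right, norm_smul, Complex.norm_of_nonneg hc]
    _ ≤ ‖(c : ℂ) • A + B‖ + ‖B‖ := norm_sub_le _ _

theorem frobC_rIntEM_le (r : E3 → E3 → Matrix (Fin 3) (Fin 3) ℂ) (ξ γ : E3)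
    (hr : ∀ i j, Integrable (fun z => r z ξ i j)) :
    frobC (rIntEM r ξ γ) ≤ ∫ z in Metric.ball (0 : E3) 1, frobC (r z ξ) := by
  set phase : E3 → ℂ := fun z => Complex.exp (-Complex.I * ((inner ℝ γ z : ℝ) : ℂ))
  have hphase : Continuous phase := by fun_prop
  have hint : ∀ i j, Integrable (fun z => (phase z • r z ξ) i j)
      (volume.restrict (Metric.ball (0 : E3) 1)) := fun i j =>
    (hr i j).restrict.bdd_mul hphase.aestronglyMeasurable
      (ae_of_all _ fun z => (norm_exp_neg_I_mul_ofReal _).le)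
  have hR : rIntEM r ξ γ = Matrix.of fun i j =>
      ∫ z in Metric.ball (0 : E3) 1, (phase z • r z ξ) i j := by
    ext i j
    simp only [rIntEM, Matrix.of_apply, Matrix.smul_apply, smul_eq_mul, mul_comm, phase]
  simp only [hR, frobC_eq_norm]
  calc _ ≤ ∫ z in Metric.ball (0 : E3) 1, ‖phase z • r z ξ‖ :=
        Matrix.frobenius_norm_of_integral_le hint
    _ = ∫ z in Metric.ball (0 : E3) 1, ‖r z ξ‖ := by
        simp only [norm_smul, phase, norm_exp_neg_I_mul_ofReal, one_mul]

end Frobenius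

theorem frobC_matHat_le (σ : E3 → Matrix (Fin 3) (Fin 3) ℝ) (γ : E3) :
    frobC (matHat σ γ) ≤ √(∑ i, ∑ j, (∫ z, |σ z i j|) ^ 2) := by
  refine Real.sqrt_le_sqrt (Finset.sum_le_sum fun i _ => Finset.sum_le_sum fun j _ => ?_)
  refine pow_le_pow_left₀ (norm_nonneg _) ?_ 2
  refine (norm_integral_le_integral_norm _).trans_eq ?_
  simp [Complex.norm_exp]

section FarField

variable {m C₂ k : ℝ} {r : E3 → E3 → Matrix (Fin 3) (Fin 3) ℂ}

theorem frobC_rIntEM_le_of_norm_eq_one (hr_int : ∀ ξ i j, Integrable (fun z => r z ξ i j))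
    (hr_bd : ∀ ξ : E3, 1 < ‖ξ‖ →
      (∫ z in Metric.ball (0 : E3) 1, frobC (r z ξ)) ≤ C₂ * ‖ξ‖ ^ (-(m + 1)))
    (hk : 1 < k) {y : E3} (hy : ‖y‖ = 1) (γ : E3) :
    frobC (rIntEM r (-(k • y)) γ) ≤ C₂ * k ^ (-(m + 1)) := by
  have hξ : ‖-(k • y)‖ = k := by
    rw [norm_neg, norm_smul, hy, mul_one, Real.norm_of_nonneg (by linarith)]
  refine (frobC_rIntEM_le r _ γ (hr_int _)).trans ?_
  have h := hr_bd _ (by rwa [hξ])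
  rwa [hξ] at h

theorem FEM_le_MEM (σ : E3 → Matrix (Fin 3) (Fin 3) ℝ)
    (hr_int : ∀ ξ i j, Integrable (fun z => r z ξ i j))
    (hr_bd : ∀ ξ : E3, 1 < ‖ξ‖ →
      (∫ z in Metric.ball (0 : E3) 1, frobC (r z ξ)) ≤ C₂ * ‖ξ‖ ^ (-(m + 1)))
    (hk : 1 < k) {x y : E3} (hx : ‖x‖ = 1) (hy : ‖y‖ = 1) :
    FEM m σ r k x y ≤ MEM m σ r k := by
  refine le_csSup ⟨k ^ 2 * beta3 ^ 2 * (k ^ (-m) * √(∑ i, ∑ j, (∫ z, |σ z i j|) ^ 2) +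
      C₂ * k ^ (-(m + 1))), ?_⟩ ⟨x, y, hx, hy, rfl⟩
  rintro _ ⟨x', y', -, hy', rfl⟩
  have hkm : 0 ≤ k ^ (-m) := Real.rpow_nonneg (by linarith) _
  refine mul_le_mul_of_nonneg_left ((frobC_smul_add_le hkm _ _).trans ?_) (by positivity)
  gcongr
  · exact frobC_matHat_le σ _
  · exact frobC_rIntEM_le_of_norm_eq_one hr_int hr_bd hk hy' _

end FarField

theorem statement6_general (m C₂ : ℝ)
    (σ : E3 → Matrix (Fin 3) (Fin 3) ℝ)
    (r : E3 → E3 → Matrix (Fin 3) (Fin 3) ℂ)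
    (hr_int : ∀ ξ i j, Integrable (fun z => r z ξ i j))
    (hr_bd : ∀ ξ : E3, 1 < ‖ξ‖ →
      (∫ z in Metric.ball (0 : E3) 1, frobC (r z ξ)) ≤ C₂ * ‖ξ‖ ^ (-(m + 1)))
    (k : ℝ) (hk : 1 < k) (γ : E3) (hγ : ‖γ‖ ≤ 2 * k) :
    frobC (matHat σ γ) ≤ 1 / beta3 ^ 2 * k ^ (m - 2) * MEM m σ r k + C₂ * k⁻¹ := by
  have hk0 : 0 < k := by linarith
  obtain ⟨x, y, hx, hy, hkxy⟩ := exists_norm_eq_one_smul_add_eq (by simp) hk0 hγ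
  have hF := FEM_le_MEM σ hr_int hr_bd hk hx hy
  rw [FEM, hkxy] at hF
  set S := ((k ^ (-m) : ℝ) : ℂ) • matHat σ γ + rIntEM r (-(k • y)) γ
  have hR := frobC_rIntEM_le_of_norm_eq_one hr_int hr_bd hk hy γ
  have hA := mul_frobC_le_frobC_smul_add (Real.rpow_nonneg hk0.le (-m)) (matHat σ γ)
    (rIntEM r (-(k • y)) γ)
  have hβ : 0 < beta3 := by unfold beta3; positivity
  have e₁ : k ^ m * k ^ (-m) = 1 := by rw [← Real.rpow_add hk0, add_neg_cancel, Real.rpow_zero]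
  have e₂ : k ^ m * k ^ (-(m + 1)) = k⁻¹ := by
    rw [← Real.rpow_add hk0, show m + -(m + 1) = -1 by ring, Real.rpow_neg_one]
  have e₃ : k ^ (m - 2) * k ^ 2 = k ^ m := by
    rw [← Real.rpow_natCast, ← Real.rpow_add hk0]; norm_num
  calc frobC (matHat σ γ) = k ^ m * (k ^ (-m) * frobC (matHat σ γ)) := by
        rw [← mul_assoc, e₁, one_mul]
    _ ≤ k ^ m * frobC S + k ^ m * (C₂ * k ^ (-(m + 1))) := by
        rw [← mul_add]; gcongr; exact hA.trans (by gcongr)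
    _ = 1 / beta3 ^ 2 * k ^ (m - 2) * (k ^ 2 * beta3 ^ 2 * frobC S) + C₂ * k⁻¹ := by
        rw [← e₂, ← e₃]; field_simp
    _ ≤ _ := by gcongr

/-- For every `k > 1` and every `γ ∈ ℝ³` with `|γ| ≤ 2k`, the Fourier
coefficient matrix of the strength satisfies
`‖σ̂(γ)‖_F ≤ (1/β₃²) k^{m−2} M_EM(k) + C₂ k⁻¹`. -/
theorem statement6 (m C₂ : ℝ) (hm : -1 < m ∧ m ≤ 3) (hC₂ : 0 < C₂)
    (σ : E3 → Matrix (Fin 3) (Fin 3) ℝ)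
    (hσ_int : ∀ i j, Integrable (fun z => σ z i j))
    (hσ_supp : ∀ z ∉ Metric.ball (0 : E3) 1, σ z = 0)
    (hσ_psd : ∀ z, (σ z).IsSymm ∧ (σ z).PosSemidef)
    (r : E3 → E3 → Matrix (Fin 3) (Fin 3) ℂ)
    (hr_int : ∀ ξ i j, Integrable (fun z => r z ξ i j))
    (hr_supp : ∀ ξ : E3, ∀ z ∉ Metric.ball (0 : E3) 1, r z ξ = 0)
    (hr_bd : ∀ ξ : E3, 1 < ‖ξ‖ →
      (∫ z in Metric.ball (0 : E3) 1, frobC (r z ξ)) ≤ C₂ * ‖ξ‖ ^ (-(m + 1)))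
    (k : ℝ) (hk : 1 < k) (γ : E3) (hγ : ‖γ‖ ≤ 2 * k) :
    frobC (matHat σ γ) ≤ 1 / beta3 ^ 2 * k ^ (m - 2) * MEM m σ r k + C₂ * k⁻¹ :=
  statement6_general m C₂ σ r hr_int hr_bd k hk γ hγ
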